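/- arXiv:2001.03880 — 3 statements merged into one kernel-verified Lean document; each statement's English description precedes it below -/
import Mathlib

section
/- Let Ω ⊆ Σ^S be a configuration space with the topological Markov property (TMP) and a safe symbol ⋄. If Ω is shift-invariant over S = ℤ^d, then Ω is a shift of finite type: there is a finite set B ⊂ ℤ^d such that Ω equals the set of configurations x for which every translate of x restricted to B is globally admissible for Ω. -/
open scoped Classical

/-- Configurations on `ℤ^d` over the alphabet `α`. -/
abbrev Config (d : ℕ) (α : Type*) := (Fin d → ℤ) → α

/-- The shift of a configuration by `k ∈ ℤ^d`. -/
def shiftBy {d : ℕ} {α : Type*} (k : Fin d → ℤ) (x : Config d α) : Config d α :=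
  fun i => x (i + k)

/-- Topological Markov property: every finite set `A` admits a finite memory set `B ⊇ A`:
whenever `x, y ∈ Ω` agree on `B \ A`, the configuration `x_B ∨ y_{S∖A}` lies in `Ω`. -/
def TMP {d : ℕ} {α : Type*} (Ω : Set (Config d α)) : Prop :=
  ∀ A : Finset (Fin d → ℤ), ∃ B : Finset (Fin d → ℤ), A ⊆ B ∧
    ∀ x ∈ Ω, ∀ y ∈ Ω, (∀ i ∈ B, i ∉ A → x i = y i) →
      (fun i => if i ∈ B then x i else y i) ∈ Ω

/-- If for every finite set of coordinates there is an element of `Ω` agreeing with `x`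
there, then `x` is in the closure of `Ω`. -/
lemma mem_closure_of_agree {d : ℕ} {α : Type*} [TopologicalSpace α] [DiscreteTopology α]
    (Ω : Set (Config d α)) (x : Config d α)
    (h : ∀ F : Finset (Fin d → ℤ), ∃ y ∈ Ω, ∀ i ∈ F, y i = x i) :
    x ∈ closure Ω := by
  rw [mem_closure_iff_nhds]
  intro U hU
  rw [nhds_pi] at hU
  obtain ⟨I, hI, t, ht, hsub⟩ := Filter.mem_pi.mp hU
  obtain ⟨y, hy, hagree⟩ := h hI.toFinset
  refine ⟨y, hsub ?_, hy⟩
  intro i hi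
  have h1 := hagree i (hI.mem_toFinset.mpr hi)
  rw [h1]
  have h2 := ht i
  rwa [nhds_discrete, Filter.mem_pure] at h2

/-- Filling a finite set of sites with the safe symbol stays in `Ω`. -/
lemma diamondFill {d : ℕ} {α : Type*} (Ω : Set (Config d α)) (diamond : α)
    (hsafe : ∀ x ∈ Ω, ∀ k : Fin d → ℤ, Function.update x k diamond ∈ Ω) :
    ∀ F : Finset (Fin d → ℤ), ∀ x ∈ Ω,
      (fun i => if i ∈ F then diamond else x i) ∈ Ω := by
  intro F
  induction F using Finset.induction_on with
  | empty => intro x hx; simpa using hx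
  | @insert k F hk ih =>
    intro x hx
    have heq : (fun i => if i ∈ insert k F then diamond else x i)
        = Function.update (fun i => if i ∈ F then diamond else x i) k diamond := by
      funext i
      by_cases h : i = k
      · subst h; simp
      · simp [Function.update_of_ne h, Finset.mem_insert, h]
    rw [heq]
    exact hsafe _ (ih x hx) k

/-- The memory set at `0` translates to a memory set at `k`. -/
lemma glue_shift {d : ℕ} {α : Type*} (Ω : Set (Config d α))
    (hshift : ∀ k : Fin d → ℤ, ∀ x ∈ Ω, shiftBy k x ∈ Ω)
    (B₀ : Finset (Fin d → ℤ))
    (hB₀ : ∀ x ∈ Ω, ∀ y ∈ Ω, (∀ i ∈ B₀, i ∉ ({0} : Finset (Fin d → ℤ)) → x i = y i) →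
      (fun i => if i ∈ B₀ then x i else y i) ∈ Ω)
    (k : Fin d → ℤ) (u v : Config d α) (hu : u ∈ Ω) (hv : v ∈ Ω)
    (hagree : ∀ i ∈ B₀.image (· + k), i ≠ k → u i = v i) :
    (fun i => if i ∈ B₀.image (· + k) then u i else v i) ∈ Ω := by
  have hu' := hshift k u hu
  have hv' := hshift k v hv
  have hag : ∀ i ∈ B₀, i ∉ ({0} : Finset (Fin d → ℤ)) → shiftBy k u i = shiftBy k v i := by
    intro i hi h0
    simp only [Finset.mem_singleton] at h0
    apply hagree
    · exact Finset.mem_image.mpr ⟨i, hi, rfl⟩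
    · intro hc
      apply h0
      have : i + k = 0 + k := by rw [hc, zero_add]
      exact add_right_cancel this
  have hg := hB₀ _ hu' _ hv' hag
  have hg2 := hshift (-k) _ hg
  have heq : shiftBy (-k) (fun i => if i ∈ B₀ then shiftBy k u i else shiftBy k v i)
      = (fun i => if i ∈ B₀.image (· + k) then u i else v i) := by
    funext j
    have hmem : j ∈ B₀.image (· + k) ↔ j + -k ∈ B₀ := by
      constructor
      · intro h
        obtain ⟨b, hb, rfl⟩ := Finset.mem_image.mp h
        simpa using hb
      · intro h
        exact Finset.mem_image.mpr ⟨j + -k, h, by simp⟩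
    simp only [shiftBy]
    by_cases h : j ∈ B₀.image (· + k)
    · rw [if_pos (hmem.mp h), if_pos h]
      simp
    · rw [if_neg (fun hc => h (hmem.mpr hc)), if_neg h]
      simp
  rwa [heq] at hg2

/-- A shift-invariant configuration space with the TMP and a safe symbol is a
shift of finite type: there is a finite `B ⊂ ℤ^d` such that `Ω` is exactly the set of
configurations all of whose translates, restricted to `B`, are globally admissible for `Ω`. -/
theorem stmt_4 {d : ℕ} {α : Type*} [Fintype α] [TopologicalSpace α] [DiscreteTopology α]
    (Ω : Set (Config d α)) (hne : Ω.Nonempty) (hclosed : IsClosed Ω)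
    (hshift : ∀ k : Fin d → ℤ, ∀ x ∈ Ω, shiftBy k x ∈ Ω)
    (htmp : TMP Ω)
    (diamond : α) (hsafe : ∀ x ∈ Ω, ∀ k : Fin d → ℤ, Function.update x k diamond ∈ Ω) :
    ∃ B : Finset (Fin d → ℤ), ∀ x : Config d α,
      x ∈ Ω ↔ ∀ k : Fin d → ℤ, ∃ y ∈ Ω, ∀ i ∈ B, y i = x (i + k) := by
  obtain ⟨B₀, hB₀sub, hB₀⟩ := htmp {0}
  refine ⟨B₀, fun x => ⟨?_, ?_⟩⟩
  · intro hx k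
    exact ⟨shiftBy k x, hshift k x hx, fun i _ => rfl⟩
  · intro hx
    have key : ∀ F : Finset (Fin d → ℤ),
        (fun i => if i ∈ F then x i else diamond) ∈ Ω := by
      intro F
      induction F using Finset.induction_on with
      | empty =>
        simp only [Finset.notMem_empty, if_false]
        have hcl : (fun _ : Fin d → ℤ => diamond) ∈ closure Ω := by
          apply mem_closure_of_agree
          intro F
          obtain ⟨x₀, hx₀⟩ := hne
          exact ⟨_, diamondFill Ω diamond hsafe F x₀ hx₀, fun i hi => by simp [hi]⟩
        rwa [hclosed.closure_eq] at hcl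
      | @insert k F hk ih =>
        obtain ⟨y, hy, hyx⟩ := hx k
        set w := shiftBy (-k) y with hw
        have hwΩ : w ∈ Ω := hshift (-k) y hy
        have hwx : ∀ j ∈ B₀.image (· + k), w j = x j := by
          intro j hj
          obtain ⟨b, hb, rfl⟩ := Finset.mem_image.mp hj
          have h1 : w (b + k) = y b := by simp [hw, shiftBy]
          rw [h1, hyx b hb]
        set D := (B₀.image (· + k)) \ insert k F with hD
        set w' := fun i => if i ∈ D then diamond else w i with hw'
        have hw'Ω : w' ∈ Ω := diamondFill Ω diamond hsafe D w hwΩ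
        have hk0 : k ∈ B₀.image (· + k) :=
          Finset.mem_image.mpr ⟨0, hB₀sub (Finset.mem_singleton_self 0), by simp⟩
        have hagree : ∀ i ∈ B₀.image (· + k), i ≠ k →
            w' i = (fun i => if i ∈ F then x i else diamond) i := by
          intro i hi hik
          by_cases hiF : i ∈ F
          · have hiD : i ∉ D := by simp [hD, hiF]
            simp [hw', hiD, hiF, hwx i hi]
          · have hiD : i ∈ D := Finset.mem_sdiff.mpr ⟨hi, by simp [Finset.mem_insert, hik, hiF]⟩
            simp [hw', hiD, hiF]
        have hglue := glue_shift Ω hshift B₀ hB₀ k w' _ hw'Ω ih hagree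
        have heq : (fun i => if i ∈ B₀.image (· + k) then w' i
              else (fun i => if i ∈ F then x i else diamond) i)
            = (fun i => if i ∈ insert k F then x i else diamond) := by
          funext i
          by_cases hiB : i ∈ B₀.image (· + k)
          · rw [if_pos hiB]
            by_cases hik : i = k
            · subst hik
              have hiD : i ∉ D := by simp [hD]
              simp [hw', hiD, hwx i hiB]
            · by_cases hiF : i ∈ F
              · have hiD : i ∉ D := by simp [hD, hiF]
                simp [hw', hiD, hiF, hwx i hiB, Finset.mem_insert]
              · have hiD : i ∈ D := Finset.mem_sdiff.mpr ⟨hiB, by simp [Finset.mem_insert, hik, hiF]⟩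
                simp [hw', hiD, Finset.mem_insert, hik, hiF]
          · rw [if_neg hiB]
            have hik : i ≠ k := fun hc => hiB (hc ▸ hk0)
            simp [Finset.mem_insert, hik]
        rwa [heq] at hglue
    have hcl : x ∈ closure Ω := by
      apply mem_closure_of_agree
      intro F
      exact ⟨_, key F, fun i hi => by simp [hi]⟩
    rwa [hclosed.closure_eq] at hcl
end

section
/- Let Ω be a shift space with the pivot property, and let Φ be a shift-invariant variation-summable interaction on Ω. Then for every finite A ⊂ ℤ^d and patterns w, w' ∈ L_A(Ω) lying in the same asymptotic equivalence class (i.e., w = x_A and w' = x'_A for some asymptotic pair x, x' ∈ Ω), one has |Φ(w) − Φ(w')| ≤ |L_A(Ω)| · ‖Φ‖_VS. -/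
open scoped ENNReal Classical

/-- Two configurations are asymptotic if they differ at finitely many sites. -/
def Asymptotic {d : ℕ} {α : Type*} (x y : Config d α) : Prop := {i | x i ≠ y i}.Finite

/-- Interaction: each `Φ_C` depends only on the restriction of the configuration to `C`. -/
def IsLocalInteraction {d : ℕ} {α : Type*} (Φ : Finset (Fin d → ℤ) → Config d α → ℝ) : Prop :=
  ∀ C : Finset (Fin d → ℤ), ∀ x y : Config d α, (∀ i ∈ C, x i = y i) → Φ C x = Φ C y

/-- Shift invariance of an interaction: `Φ_{k+C}(x) = Φ_C(σ^k x)`. -/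
def IsShiftInvInteraction {d : ℕ} {α : Type*} (Φ : Finset (Fin d → ℤ) → Config d α → ℝ) : Prop :=
  ∀ (k : Fin d → ℤ) (C : Finset (Fin d → ℤ)) (x : Config d α),
    Φ (C.image (fun i => i + k)) x = Φ C (fun i => x (i + k))

/-- The variation of `f` on a set of sites `A`, over pairs of configurations of `Ω`
agreeing off `A`, valued in `ℝ≥0∞`. -/
noncomputable def Var {d : ℕ} {α : Type*} (Ω : Set (Config d α)) (A : Set (Fin d → ℤ))
    (f : Config d α → ℝ) : ℝ≥0∞ :=
  ⨆ p : {p : Config d α × Config d α //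
      p.1 ∈ Ω ∧ p.2 ∈ Ω ∧ ∀ i ∉ A, p.1 i = p.2 i},
    ENNReal.ofReal |f (p : Config d α × Config d α).2 - f (p : Config d α × Config d α).1|

/-- The VS-seminorm `‖Φ‖_VS = ∑_{C ∋ 0} Var_0(Φ_C)`. -/
noncomputable def normVS {d : ℕ} {α : Type*} (Ω : Set (Config d α))
    (Φ : Finset (Fin d → ℤ) → Config d α → ℝ) : ℝ≥0∞ :=
  ∑' C : {C : Finset (Fin d → ℤ) // (0 : Fin d → ℤ) ∈ C},
    Var Ω {(0 : Fin d → ℤ)} (Φ C)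

/-- Pivot property: any two asymptotic configurations of `Ω` are connected by a finite chain
of configurations in `Ω`, consecutive ones differing at exactly one site. -/
def PivotProperty {d : ℕ} {α : Type*} (Ω : Set (Config d α)) : Prop :=
  ∀ x ∈ Ω, ∀ y ∈ Ω, Asymptotic x y →
    ∃ (n : ℕ) (z : ℕ → Config d α), z 0 = x ∧ z n = y ∧ (∀ i ≤ n, z i ∈ Ω) ∧
      ∀ i < n, ∃ s : Fin d → ℤ, z i s ≠ z (i + 1) s ∧ ∀ t, t ≠ s → z i t = z (i + 1) t

section Aux

variable {d : ℕ} {α : Type*}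

lemma step_bound (Ω : Set (Config d α))
    (hshiftΩ : ∀ k : Fin d → ℤ, ∀ x ∈ Ω, (fun i => x (i + k)) ∈ Ω)
    (Φ : Finset (Fin d → ℤ) → Config d α → ℝ)
    (hinv : IsShiftInvInteraction Φ)
    (A : Finset (Fin d → ℤ)) {s : Fin d → ℤ} (hs : s ∈ A)
    {z z' : Config d α} (hz : z ∈ Ω) (hz' : z' ∈ Ω)
    (hagree : ∀ t, t ≠ s → z t = z' t) :
    ENNReal.ofReal |Φ A z - Φ A z'| ≤ normVS Ω Φ := by
  set C : Finset (Fin d → ℤ) := A.image (fun a => a - s) with hC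
  have h0C : (0 : Fin d → ℤ) ∈ C := Finset.mem_image.2 ⟨s, hs, by simp⟩
  have himg : C.image (fun i => i + s) = A := by
    ext a
    simp only [hC, Finset.mem_image]
    constructor
    · rintro ⟨b, ⟨c, hc, rfl⟩, rfl⟩; simpa using hc
    · intro ha; exact ⟨a - s, ⟨a, ha, rfl⟩, by abel⟩
  have h1 : Φ A z = Φ C (fun i => z (i + s)) := by rw [← himg]; exact hinv s C z
  have h2 : Φ A z' = Φ C (fun i => z' (i + s)) := by rw [← himg]; exact hinv s C z'
  have hvar : ENNReal.ofReal |Φ A z - Φ A z'| ≤ Var Ω {(0 : Fin d → ℤ)} (Φ C) := by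
    rw [h1, h2]
    have hmem : (fun i => z' (i + s)) ∈ Ω := hshiftΩ s z' hz'
    have hmem' : (fun i => z (i + s)) ∈ Ω := hshiftΩ s z hz
    have hag : ∀ i ∉ ({(0 : Fin d → ℤ)} : Set (Fin d → ℤ)),
        (fun i => z' (i + s)) i = (fun i => z (i + s)) i := by
      intro i hi
      simp only [Set.mem_singleton_iff] at hi
      have : i + s ≠ s := by
        intro h; apply hi; have := congrArg (fun v => v - s) h; simpa using this
      exact (hagree (i + s) this).symm
    exact le_iSup (fun p : {p : Config d α × Config d α //
        p.1 ∈ Ω ∧ p.2 ∈ Ω ∧ ∀ i ∉ ({(0 : Fin d → ℤ)} : Set (Fin d → ℤ)), p.1 i = p.2 i} =>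
      ENNReal.ofReal |Φ C (p : Config d α × Config d α).2 - Φ C (p : Config d α × Config d α).1|)
      ⟨((fun i => z' (i + s)), (fun i => z (i + s))), hmem, hmem', hag⟩
  exact hvar.trans (ENNReal.le_tsum (⟨C, h0C⟩ :
    {C : Finset (Fin d → ℤ) // (0 : Fin d → ℤ) ∈ C}))

lemma key_chain (Ω : Set (Config d α))
    (hshiftΩ : ∀ k : Fin d → ℤ, ∀ x ∈ Ω, (fun i => x (i + k)) ∈ Ω)
    (Φ : Finset (Fin d → ℤ) → Config d α → ℝ)
    (hloc : IsLocalInteraction Φ) (hinv : IsShiftInvInteraction Φ)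
    (A : Finset (Fin d → ℤ)) :
    ∀ n : ℕ, ∀ z : ℕ → Config d α, (∀ i ≤ n, z i ∈ Ω) →
      (∀ i < n, ∃ s : Fin d → ℤ, z i s ≠ z (i + 1) s ∧ ∀ t, t ≠ s → z i t = z (i + 1) t) →
      ENNReal.ofReal |Φ A (z 0) - Φ A (z n)| ≤
        ((((fun i : ℕ => fun a : A => z i (a : Fin d → ℤ)) '' Set.Iic n).ncard : ℕ) : ℝ≥0∞)
          * normVS Ω Φ := by
  intro n
  induction n using Nat.strong_induction_on with
  | _ n IH =>
    intro z hmem hstep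
    by_cases h0n : (fun a : A => z 0 (a : Fin d → ℤ)) = (fun a : A => z n (a : Fin d → ℤ))
    · have : Φ A (z 0) = Φ A (z n) :=
        hloc A (z 0) (z n) (fun i hi => congrFun h0n ⟨i, hi⟩)
      simp [this]
    · obtain ⟨j, hjmem, hjmax⟩ :
        ∃ j ∈ (Finset.Iic n).filter
            (fun j => (fun a : A => z j (a : Fin d → ℤ)) = (fun a : A => z 0 (a : Fin d → ℤ))),
          ∀ k ∈ (Finset.Iic n).filter
            (fun j => (fun a : A => z j (a : Fin d → ℤ)) = (fun a : A => z 0 (a : Fin d → ℤ))),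
            k ≤ j := by
        refine ⟨_, Finset.max'_mem _ ⟨0, by simp⟩, fun k hk => Finset.le_max' _ k hk⟩
      rw [Finset.mem_filter, Finset.mem_Iic] at hjmem
      obtain ⟨hjn, hjpat⟩ := hjmem
      have hjlt : j < n := lt_of_le_of_ne hjn (fun h => h0n ((h ▸ hjpat).symm))
      obtain ⟨s, hne, hag⟩ := hstep j hjlt
      have hsA : s ∈ A := by
        by_contra hsA
        have hp : (fun a : A => z (j + 1) (a : Fin d → ℤ)) =
            (fun a : A => z j (a : Fin d → ℤ)) := by
          funext a
          exact (hag (a : Fin d → ℤ) (by rintro rfl; exact hsA a.2)).symm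
        have h1T := hjmax (j + 1)
          (by rw [Finset.mem_filter, Finset.mem_Iic]; exact ⟨hjlt, hp.trans hjpat⟩)
        omega
      have hΦ0j : Φ A (z 0) = Φ A (z j) :=
        hloc A (z 0) (z j) (fun i hi => (congrFun hjpat ⟨i, hi⟩).symm)
      -- recursive chain
      have ih := IH (n - (j + 1)) (by omega) (fun i => z (j + 1 + i))
        (fun i hi => hmem _ (by omega))
        (fun i hi => by
          have := hstep (j + 1 + i) (by omega)
          simpa [Nat.add_assoc] using this)
      beta_reduce at ih
      rw [show j + 1 + (n - (j + 1)) = n from by omega] at ih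
      simp only [Nat.add_zero] at ih
      set S : Set (A → α) :=
        (fun i : ℕ => fun a : A => z i (a : Fin d → ℤ)) '' Set.Iic n with hS
      set S' : Set (A → α) :=
        (fun i : ℕ => fun a : A => z (j + 1 + i) (a : Fin d → ℤ)) '' Set.Iic (n - (j + 1))
        with hS'
      have hSfin : S.Finite := (Set.finite_Iic n).image _
      have hsub : S' ⊆ S := by
        rintro p ⟨i, hi, rfl⟩
        simp only [Set.mem_Iic] at hi
        exact ⟨j + 1 + i, by simp only [Set.mem_Iic]; omega, rfl⟩
      have hp0S : (fun a : A => z 0 (a : Fin d → ℤ)) ∈ S := ⟨0, by simp, rfl⟩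
      have hp0S' : (fun a : A => z 0 (a : Fin d → ℤ)) ∉ S' := by
        rintro ⟨i, hi, hpi⟩
        simp only [Set.mem_Iic] at hi
        have h1T := hjmax (j + 1 + i)
          (by rw [Finset.mem_filter, Finset.mem_Iic]; exact ⟨by omega, hpi⟩)
        omega
      have hss : S' ⊂ S := ⟨hsub, fun h => hp0S' (h hp0S)⟩
      have hcard : S'.ncard + 1 ≤ S.ncard :=
        Nat.succ_le_of_lt (Set.ncard_lt_ncard hss hSfin)
      have hstepb : ENNReal.ofReal |Φ A (z j) - Φ A (z (j + 1))| ≤ normVS Ω Φ :=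
        step_bound Ω hshiftΩ Φ hinv A hsA (hmem j (by omega)) (hmem (j + 1) (by omega)) hag
      calc ENNReal.ofReal |Φ A (z 0) - Φ A (z n)|
          = ENNReal.ofReal |Φ A (z j) - Φ A (z n)| := by rw [hΦ0j]
        _ ≤ ENNReal.ofReal (|Φ A (z j) - Φ A (z (j + 1))| + |Φ A (z (j + 1)) - Φ A (z n)|) :=
            ENNReal.ofReal_le_ofReal (abs_sub_le _ _ _)
        _ = ENNReal.ofReal |Φ A (z j) - Φ A (z (j + 1))| +
              ENNReal.ofReal |Φ A (z (j + 1)) - Φ A (z n)| :=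
            ENNReal.ofReal_add (abs_nonneg _) (abs_nonneg _)
        _ ≤ normVS Ω Φ + (S'.ncard : ℝ≥0∞) * normVS Ω Φ := add_le_add hstepb ih
        _ = ((S'.ncard + 1 : ℕ) : ℝ≥0∞) * normVS Ω Φ := by push_cast; ring
        _ ≤ (S.ncard : ℝ≥0∞) * normVS Ω Φ :=
            mul_le_mul_left (by exact_mod_cast hcard) _

end Aux

/-- for a shift-invariant variation-summable interaction `Φ` on a shift space
with the pivot property, if `w = x_A` and `w' = x'_A` for an asymptotic pair `x, x' ∈ Ω`, then
`|Φ(w) - Φ(w')| ≤ |L_A(Ω)| ⬝ ‖Φ‖_VS`. -/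
theorem stmt_9 {d : ℕ} {α : Type*} [Fintype α] [TopologicalSpace α] [DiscreteTopology α]
    (Ω : Set (Config d α)) (hne : Ω.Nonempty) (hclosed : IsClosed Ω)
    (hshiftΩ : ∀ k : Fin d → ℤ, ∀ x ∈ Ω, (fun i => x (i + k)) ∈ Ω)
    (hpivot : PivotProperty Ω)
    (Φ : Finset (Fin d → ℤ) → Config d α → ℝ)
    (hloc : IsLocalInteraction Φ) (hinv : IsShiftInvInteraction Φ)
    (hVS : ∀ A : Finset (Fin d → ℤ),
      (∑' C : {C : Finset (Fin d → ℤ) // (C ∩ A).Nonempty}, Var Ω (A : Set (Fin d → ℤ)) (Φ C))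
        ≠ ⊤) :
    ∀ A : Finset (Fin d → ℤ), ∀ x ∈ Ω, ∀ x' ∈ Ω, Asymptotic x x' →
      ENNReal.ofReal |Φ A x - Φ A x'|
        ≤ (((fun z : Config d α => fun i : A => z (i : Fin d → ℤ)) '' Ω).ncard : ℝ≥0∞)
            * normVS Ω Φ := by
  intro A x hx x' hx' hasym
  obtain ⟨n, z, hz0, hzn, hmem, hstep⟩ := hpivot x hx x' hx' hasym
  have hk := key_chain Ω hshiftΩ Φ hloc hinv A n z hmem hstep
  rw [hz0, hzn] at hk
  refine hk.trans (mul_le_mul_left ?_ _)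
  have hsub : ((fun i : ℕ => fun a : A => z i (a : Fin d → ℤ)) '' Set.Iic n) ⊆
      ((fun w : Config d α => fun i : A => w (i : Fin d → ℤ)) '' Ω) := by
    rintro p ⟨i, hi, rfl⟩
    exact ⟨z i, hmem i hi, rfl⟩
  exact_mod_cast Set.ncard_le_ncard hsub (Set.toFinite _)
end

section
/- Let Ω be a shift space with a safe symbol. Then every shift-invariant continuous cocycle ψ on the asymptotic relation of Ω satisfies the linear growth condition: for every finite A ⊂ ℤ^d and every pair (x,y) of configurations in Ω agreeing off A, one has |ψ(x,y)| ≤ 2|A| · ‖ψ‖_Sull, where ‖ψ‖_Sull = sup_{x ∈ Ω} |ψ(x, ζ₀x)| and ζ₀x replaces the origin symbol of x by the safe symbol. -/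
open scoped ENNReal Classical

/-- Replace all symbols in `A` by `diamond`. -/
def zeta {d : ℕ} {α : Type*} (diamond : α) (A : Finset (Fin d → ℤ)) (x : Config d α) :
    Config d α := fun i => if i ∈ A then diamond else x i

lemma zeta_insert {d : ℕ} {α : Type*} (diamond : α) (A : Finset (Fin d → ℤ))
    (k : Fin d → ℤ) (x : Config d α) :
    zeta diamond (insert k A) x = Function.update (zeta diamond A x) k diamond := by
  funext i
  by_cases hik : i = k
  · subst hik; simp [zeta]
  · simp [zeta, Function.update_apply, hik]

lemma asym_zeta {d : ℕ} {α : Type*} (diamond : α) (A : Finset (Fin d → ℤ))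
    (x : Config d α) : Asymptotic x (zeta diamond A x) := by
  apply Set.Finite.subset A.finite_toSet
  intro i hi
  by_contra h
  simp only [Finset.mem_coe] at h
  exact hi (by simp [zeta, h])

lemma asym_update {d : ℕ} {α : Type*} (diamond : α) (k : Fin d → ℤ)
    (x : Config d α) : Asymptotic x (Function.update x k diamond) := by
  apply Set.Finite.subset (Set.finite_singleton k)
  intro i hi
  by_contra h
  simp only [Set.mem_singleton_iff] at h
  exact hi (by simp [Function.update_apply, h])

lemma asym_symm {d : ℕ} {α : Type*} {x y : Config d α} (h : Asymptotic x y) :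
    Asymptotic y x := by
  apply h.subset
  intro i hi
  exact fun e => hi e.symm

lemma asym_trans {d : ℕ} {α : Type*} {x y z : Config d α} (h : Asymptotic x y)
    (h' : Asymptotic y z) : Asymptotic x z := by
  apply (h.union h').subset
  intro i hi
  by_contra hc
  simp only [Set.mem_union, Set.mem_setOf_eq, not_or, not_not] at hc
  exact hi (hc.1.trans hc.2)

/-- on a shift space with a safe symbol, every shift-invariant continuous
cocycle `ψ` on the asymptotic relation satisfies the linear growth condition
`|ψ(x,y)| ≤ 2 |A| ⬝ ‖ψ‖_Sull` for any pair `(x,y)` of configurations of `Ω` agreeing off the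
finite set `A`, where `‖ψ‖_Sull = sup_{x ∈ Ω} |ψ(x, ζ₀ x)|` and `ζ₀` replaces the origin
symbol by the safe symbol. -/
theorem stmt_14 {d : ℕ} {α : Type*} [Fintype α] [TopologicalSpace α] [DiscreteTopology α]
    (Ω : Set (Config d α)) (hne : Ω.Nonempty) (hclosed : IsClosed Ω)
    (hshift : ∀ k : Fin d → ℤ, ∀ x ∈ Ω, shiftBy k x ∈ Ω)
    (diamond : α) (hsafe : ∀ x ∈ Ω, ∀ k : Fin d → ℤ, Function.update x k diamond ∈ Ω)
    (ψ : Config d α → Config d α → ℝ)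
    (hcoc : ∀ x ∈ Ω, ∀ y ∈ Ω, ∀ z ∈ Ω, Asymptotic x y → Asymptotic y z →
      ψ x y + ψ y z = ψ x z)
    (hinv : ∀ k : Fin d → ℤ, ∀ x ∈ Ω, ∀ y ∈ Ω, Asymptotic x y →
      ψ (shiftBy k x) (shiftBy k y) = ψ x y)
    (hcont : ∀ A : Finset (Fin d → ℤ),
      ContinuousOn (fun p : Config d α × Config d α => ψ p.1 p.2)
        {p | p.1 ∈ Ω ∧ p.2 ∈ Ω ∧ ∀ i ∉ A, p.1 i = p.2 i}) :
    ∀ A : Finset (Fin d → ℤ), ∀ x ∈ Ω, ∀ y ∈ Ω, (∀ i, i ∉ A → x i = y i) →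
      ENNReal.ofReal |ψ x y|
        ≤ 2 * (A.card : ℝ≥0∞) *
            ⨆ x' ∈ Ω, ENNReal.ofReal |ψ x' (Function.update x' (0 : Fin d → ℤ) diamond)| := by
  intro A x hx y hy hxy
  set S := ⨆ x' ∈ Ω, ENNReal.ofReal |ψ x' (Function.update x' (0 : Fin d → ℤ) diamond)|
    with hS
  -- ψ vanishes on the diagonal
  have hzero : ∀ z ∈ Ω, ψ z z = 0 := by
    intro z hz
    have hasym : Asymptotic z z := by
      apply Set.Finite.subset (Set.finite_empty)
      intro i hi; exact absurd rfl hi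
    have := hcoc z hz z hz z hz hasym hasym
    linarith
  -- single-site replacement is bounded by S
  have hstep : ∀ z ∈ Ω, ∀ k : Fin d → ℤ,
      ENNReal.ofReal |ψ z (Function.update z k diamond)| ≤ S := by
    intro z hz k
    have hshifted : shiftBy k z ∈ Ω := hshift k z hz
    have hkey : shiftBy k (Function.update z k diamond)
        = Function.update (shiftBy k z) (0 : Fin d → ℤ) diamond := by
      funext i
      by_cases hi : i = 0
      · subst hi; simp [shiftBy, Function.update_apply]
      · have : i + k ≠ k := by
          intro h
          exact hi (by simpa using add_right_cancel (h.trans (zero_add k).symm))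
        simp [shiftBy, Function.update_apply, hi, this]
    have heq : ψ z (Function.update z k diamond)
        = ψ (shiftBy k z) (Function.update (shiftBy k z) (0 : Fin d → ℤ) diamond) := by
      rw [← hkey, hinv k z hz _ (hsafe z hz k) (asym_update diamond k z)]
    rw [heq, hS]
    exact le_iSup₂ (f := fun x' (_ : x' ∈ Ω) =>
      ENNReal.ofReal |ψ x' (Function.update x' (0 : Fin d → ℤ) diamond)|)
      (shiftBy k z) hshifted
  -- main induction: killing all of A is bounded by |A| ⬝ S
  have hmain : ∀ B : Finset (Fin d → ℤ), ∀ z ∈ Ω, zeta diamond B z ∈ Ω ∧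
      ENNReal.ofReal |ψ z (zeta diamond B z)| ≤ (B.card : ℝ≥0∞) * S := by
    intro B
    induction B using Finset.induction_on with
    | empty =>
      intro z hz
      have he : zeta diamond ∅ z = z := by funext i; simp [zeta]
      rw [he]
      refine ⟨hz, ?_⟩
      simp [hzero z hz]
    | @insert k B hk ih =>
      intro z hz
      obtain ⟨hmem, hbd⟩ := ih z hz
      rw [zeta_insert]
      have hmem' : Function.update (zeta diamond B z) k diamond ∈ Ω :=
        hsafe _ hmem k
      refine ⟨hmem', ?_⟩
      have hdecomp : ψ z (Function.update (zeta diamond B z) k diamond)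
          = ψ z (zeta diamond B z)
            + ψ (zeta diamond B z) (Function.update (zeta diamond B z) k diamond) := by
        exact (hcoc z hz _ hmem _ hmem' (asym_zeta diamond B z)
          (asym_update diamond k _)).symm
      rw [hdecomp]
      calc ENNReal.ofReal |ψ z (zeta diamond B z)
              + ψ (zeta diamond B z) (Function.update (zeta diamond B z) k diamond)|
          ≤ ENNReal.ofReal (|ψ z (zeta diamond B z)|
              + |ψ (zeta diamond B z) (Function.update (zeta diamond B z) k diamond)|) :=
            ENNReal.ofReal_le_ofReal (abs_add_le _ _)
        _ = ENNReal.ofReal |ψ z (zeta diamond B z)|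
              + ENNReal.ofReal
                |ψ (zeta diamond B z) (Function.update (zeta diamond B z) k diamond)| :=
            ENNReal.ofReal_add (abs_nonneg _) (abs_nonneg _)
        _ ≤ (B.card : ℝ≥0∞) * S + S := add_le_add hbd (hstep _ hmem k)
        _ = ((insert k B).card : ℝ≥0∞) * S := by
            rw [Finset.card_insert_of_notMem hk]
            push_cast
            ring
  obtain ⟨hxA, hxbd⟩ := hmain A x hx
  obtain ⟨hyA, hybd⟩ := hmain A y hy
  -- ζ_A x = ζ_A y
  have hzeq : zeta diamond A x = zeta diamond A y := by
    funext i
    by_cases hi : i ∈ A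
    · simp [zeta, hi]
    · simp [zeta, hi, hxy i hi]
  -- ψ x y = ψ x (ζ_A x) - ψ y (ζ_A y)
  have hasymxy : Asymptotic x y := by
    apply Set.Finite.subset A.finite_toSet
    intro i hi
    by_contra h
    exact hi (hxy i h)
  have h1 : ψ x (zeta diamond A x) + ψ (zeta diamond A x) y = ψ x y :=
    hcoc x hx _ hxA y hy (asym_zeta diamond A x)
      (by rw [hzeq]; exact asym_symm (asym_zeta diamond A y))
  have h2 : ψ (zeta diamond A y) y + ψ y (zeta diamond A y) = 0 := by
    have := hcoc _ hyA y hy _ hyA (asym_symm (asym_zeta diamond A y))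
      (asym_zeta diamond A y)
    rw [this, hzero _ hyA]
  have hpsixy : ψ x y = ψ x (zeta diamond A x) - ψ y (zeta diamond A y) := by
    have h3 : ψ (zeta diamond A x) y = - ψ y (zeta diamond A y) := by
      rw [hzeq]; linarith
    linarith
  rw [hpsixy]
  calc ENNReal.ofReal |ψ x (zeta diamond A x) - ψ y (zeta diamond A y)|
      ≤ ENNReal.ofReal (|ψ x (zeta diamond A x)| + |ψ y (zeta diamond A y)|) :=
        ENNReal.ofReal_le_ofReal (abs_sub _ _)
    _ = ENNReal.ofReal |ψ x (zeta diamond A x)|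
          + ENNReal.ofReal |ψ y (zeta diamond A y)| :=
        ENNReal.ofReal_add (abs_nonneg _) (abs_nonneg _)
    _ ≤ (A.card : ℝ≥0∞) * S + (A.card : ℝ≥0∞) * S := add_le_add hxbd hybd
    _ = 2 * (A.card : ℝ≥0∞) * S := by ring
end
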